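/- For every natural number n ≥ 1, every natural number k with 0 ≤ k ≤ n, and every nonzero complex number z: 2(n+1) z^{2n−1} P_{n−k}(J(z)) = C_k^{(n)}(z) G_n(z) + D_k^{(n)}(z) F_n(z). -/

import Mathlib

open Polynomial Finset

/-- The degree-`n` Legendre polynomial (over `ℂ`), defined by the Rodrigues formula
`P_n(x) = (1/(2^n n!)) dⁿ/dxⁿ (x²−1)ⁿ`. -/
noncomputable def legendre (n : ℕ) : Polynomial ℂ :=
  Polynomial.C (1 / (2 ^ n * n.factorial : ℂ)) *
    Polynomial.derivative^[n] ((Polynomial.X ^ 2 - 1) ^ n)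

/-- `P_n(z)`, the value of the degree-`n` Legendre polynomial at `z ∈ ℂ`. -/
noncomputable def P (n : ℕ) (z : ℂ) : ℂ := (legendre n).eval z

/-- `P_n'(z)`, the value of the derivative of the degree-`n` Legendre polynomial at `z ∈ ℂ`. -/
noncomputable def P' (n : ℕ) (z : ℂ) : ℂ := (Polynomial.derivative (legendre n)).eval z

/-- The Joukowski map `J(z) = (z + 1/z)/2`. -/
noncomputable def J (z : ℂ) : ℂ := (z + 1 / z) / 2

/-- `F_n(z) = (n+1) zⁿ P_n(J(z)) + (z^{n−1}(z²−1)/2) P_n'(J(z))`. -/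
noncomputable def F (n : ℕ) (z : ℂ) : ℂ :=
  (n + 1) * z ^ (n : ℤ) * P n (J z) + z ^ ((n : ℤ) - 1) * (z ^ 2 - 1) / 2 * P' n (J z)

/-- `G_n(z) = z^{2n} F_n(1/z)`. -/
noncomputable def G (n : ℕ) (z : ℂ) : ℂ := z ^ (2 * n) * F n (1 / z)

/-- The Laurent polynomials `C_k^{(n)}`: `C_0 = z^{n−1}`, `C_1 = z^{n−2}((2n+1)z² − 1)/(2n)`,
and for `1 ≤ k ≤ n−1`, `(n−k) C_{k+1} = (2(n−k)+1) J(z) C_k − (n−k+1) C_{k−1}`. -/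
noncomputable def Cf (n : ℕ) : ℕ → ℂ → ℂ
  | 0 => fun z => z ^ ((n : ℤ) - 1)
  | 1 => fun z => z ^ ((n : ℤ) - 2) * ((2 * n + 1) * z ^ 2 - 1) / (2 * n)
  | (k + 2) => fun z =>
      ((2 * ((n : ℂ) - (k + 1)) + 1) * J z * Cf n (k + 1) z -
          ((n : ℂ) - (k + 1) + 1) * Cf n k z) / ((n : ℂ) - (k + 1))

/-- The Laurent polynomials `D_k^{(n)}`: `D_0 = z^{n−1}`, `D_1 = z^{n−2}((2n+1) − z²)/(2n)`,
and for `1 ≤ k ≤ n−1`, `(n−k) D_{k+1} = (2(n−k)+1) J(z) D_k − (n−k+1) D_{k−1}`. -/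
noncomputable def Df (n : ℕ) : ℕ → ℂ → ℂ
  | 0 => fun z => z ^ ((n : ℤ) - 1)
  | 1 => fun z => z ^ ((n : ℤ) - 2) * ((2 * n + 1) - z ^ 2) / (2 * n)
  | (k + 2) => fun z =>
      ((2 * ((n : ℂ) - (k + 1)) + 1) * J z * Df n (k + 1) z -
          ((n : ℂ) - (k + 1) + 1) * Df n k z) / ((n : ℂ) - (k + 1))

/-!
With `w = z^(n-1)` and `x = J z`, one has `F_n(z) = w ((n+1) z P_n(x) + (z²-1)/2 P_n'(x))`, and,
since `J (1/z) = J z`, `G_n(z)` is the same expression with `-` in place of `+`. The map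
`k ↦ C_k G_n + D_k F_n` therefore obeys the three-term recurrence defining `C_k` and `D_k`,
which is Bonnet's recurrence for `k ↦ P_{n-k}(x)` read downwards. So it suffices to check
`k = 0`, where `G_n + F_n = 2(n+1) z w P_n(x)`, and `k = 1`, which becomes
`(x²-1) P_n' = n (x P_n - P_{n-1})` once `z² + 1 = 2 z x` is substituted. Both Legendre
identities follow from differentiating the Rodrigues formula: `P_{n+1}' = x P_n' + (n+1) P_n`
and `x P_{n+1}' = (n+1) P_{n+1} + P_n'`.
-/

noncomputable def rodrigues (R : Type*) [CommRing R] (n : ℕ) : R[X] :=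
  derivative^[n] ((X ^ 2 - 1) ^ n)

section Rodrigues

variable {R : Type*} [CommRing R]

theorem derivative_sq_sub_one_pow_succ (n : ℕ) :
    derivative ((X ^ 2 - 1) ^ (n + 1) : R[X]) =
      ((2 * (n + 1) : ℕ) : R[X]) * ((X ^ 2 - 1) ^ n * X) := by
  rw [derivative_pow, derivative_sub, derivative_X_sq, derivative_one, map_ofNat, map_natCast]
  push_cast
  ring

theorem derivative_rodrigues_succ (n : ℕ) :
    derivative (rodrigues R (n + 1)) =
      2 * ((n : R[X]) + 1) *
        (X * derivative (rodrigues R n) + ((n : R[X]) + 1) * rodrigues R n) := by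
  rw [rodrigues, ← Function.iterate_succ_apply' derivative, Function.iterate_succ_apply,
    derivative_sq_sub_one_pow_succ, iterate_derivative_natCast_mul, iterate_derivative_mul_X,
    add_tsub_cancel_right, nsmul_eq_mul]
  push_cast [rodrigues, Function.iterate_succ_apply']
  ring

theorem X_mul_derivative_rodrigues_succ (n : ℕ) :
    X * derivative (rodrigues R (n + 1)) =
      ((n : R[X]) + 1) * rodrigues R (n + 1) +
        2 * ((n : R[X]) + 1) * derivative (rodrigues R n) := by
  have hsq : derivative ((X ^ 2 - 1) ^ (n + 1) : R[X]) * X =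
      ((2 * (n + 1) : ℕ) : R[X]) * ((X ^ 2 - 1) ^ (n + 1) + (X ^ 2 - 1) ^ n) := by
    rw [derivative_sq_sub_one_pow_succ]; ring
  have h := congrArg (derivative^[n + 1]) hsq
  rw [iterate_derivative_derivative_mul_X, iterate_derivative_natCast_mul, iterate_map_add,
    nsmul_eq_mul] at h
  push_cast [rodrigues, Function.iterate_succ_apply'] at h ⊢
  linear_combination h

end Rodrigues

theorem legendre_eq_C_mul_rodrigues (n : ℕ) :
    legendre n = C (1 / (2 ^ n * n.factorial : ℂ)) * rodrigues ℂ n := rfl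

theorem C_one_div_two_pow_mul_factorial_eq_succ (n : ℕ) :
    C (1 / (2 ^ n * n.factorial : ℂ)) =
      C (1 / (2 ^ (n + 1) * (n + 1).factorial : ℂ)) * (2 * ((n : ℂ[X]) + 1)) := by
  rw [← map_natCast C, ← map_one C, ← map_add, ← map_ofNat C 2, ← map_mul, ← map_mul,
    Nat.factorial_succ]
  congr 1
  push_cast
  field_simp
  ring

theorem derivative_legendre_succ (n : ℕ) :
    derivative (legendre (n + 1)) =
      X * derivative (legendre n) + ((n : ℂ[X]) + 1) * legendre n := by
  rw [legendre_eq_C_mul_rodrigues, legendre_eq_C_mul_rodrigues, derivative_C_mul,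
    derivative_C_mul, derivative_rodrigues_succ, C_one_div_two_pow_mul_factorial_eq_succ n]
  ring

theorem X_mul_derivative_legendre_succ (n : ℕ) :
    X * derivative (legendre (n + 1)) =
      ((n : ℂ[X]) + 1) * legendre (n + 1) + derivative (legendre n) := by
  rw [legendre_eq_C_mul_rodrigues, legendre_eq_C_mul_rodrigues, derivative_C_mul,
    derivative_C_mul, C_one_div_two_pow_mul_factorial_eq_succ n]
  linear_combination C (1 / (2 ^ (n + 1) * (n + 1).factorial : ℂ)) *
    X_mul_derivative_rodrigues_succ (R := ℂ) n

theorem sq_sub_one_mul_derivative_legendre (n : ℕ) :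
    (X ^ 2 - 1) * derivative (legendre n) =
      ((n : ℂ[X]) + 1) * (legendre (n + 1) - X * legendre n) := by
  linear_combination X_mul_derivative_legendre_succ n - X * derivative_legendre_succ n

theorem sq_sub_one_mul_derivative_legendre_succ (n : ℕ) :
    (X ^ 2 - 1) * derivative (legendre (n + 1)) =
      ((n : ℂ[X]) + 1) * (X * legendre (n + 1) - legendre n) := by
  linear_combination X * X_mul_derivative_legendre_succ n - derivative_legendre_succ n

theorem add_two_mul_legendre_add_two (n : ℕ) :
    ((n : ℂ[X]) + 2) * legendre (n + 2) =
      (2 * (n : ℂ[X]) + 3) * X * legendre (n + 1) - ((n : ℂ[X]) + 1) * legendre n := by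
  have h : (X ^ 2 - 1) * derivative (legendre (n + 1)) =
      (((n + 1 : ℕ) : ℂ[X]) + 1) * (legendre (n + 2) - X * legendre (n + 1)) :=
    sq_sub_one_mul_derivative_legendre (n + 1)
  push_cast at h
  linear_combination sq_sub_one_mul_derivative_legendre_succ n - h

theorem add_two_mul_P_add_two (n : ℕ) (x : ℂ) :
    ((n : ℂ) + 2) * P (n + 2) x =
      (2 * (n : ℂ) + 3) * x * P (n + 1) x - ((n : ℂ) + 1) * P n x := by
  simpa [P] using congrArg (eval x) (add_two_mul_legendre_add_two n)

theorem sq_sub_one_mul_P'_succ (n : ℕ) (x : ℂ) :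
    (x ^ 2 - 1) * P' (n + 1) x = ((n : ℂ) + 1) * (x * P (n + 1) x - P n x) := by
  simpa [P, P'] using congrArg (eval x) (sq_sub_one_mul_derivative_legendre_succ n)

theorem J_one_div (z : ℂ) : J (1 / z) = J z := by
  rw [J, J, one_div_one_div, add_comm]

theorem F_eq_zpow_mul {z : ℂ} (hz : z ≠ 0) (n : ℕ) :
    F n z = z ^ ((n : ℤ) - 1) *
      (((n : ℂ) + 1) * z * P n (J z) + (z ^ 2 - 1) / 2 * P' n (J z)) := by
  rw [F, show (n : ℤ) = 1 + ((n : ℤ) - 1) by ring, zpow_add₀ hz, zpow_one,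
    add_sub_cancel_left]
  ring

theorem G_eq_zpow_mul {z : ℂ} (hz : z ≠ 0) (n : ℕ) :
    G n z = z ^ ((n : ℤ) - 1) *
      (((n : ℂ) + 1) * z * P n (J z) - (z ^ 2 - 1) / 2 * P' n (J z)) := by
  have hpow : z ^ (2 * n) * (1 / z) ^ ((n : ℤ) - 1) = z ^ ((n : ℤ) - 1) * z ^ 2 := by
    rw [one_div, inv_zpow', ← zpow_natCast, ← zpow_natCast z 2, ← zpow_add₀ hz,
      ← zpow_add₀ hz]
    congr 1
    push_cast
    ring
  rw [G, F_eq_zpow_mul (one_div_ne_zero hz), J_one_div, ← mul_assoc, hpow]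
  field_simp
  ring

theorem partial_fraction_lower_zero (n : ℕ) {z : ℂ} (hz : z ≠ 0) :
    2 * ((n : ℂ) + 1) * z ^ (2 * (n : ℤ) - 1) * P n (J z) =
      Cf n 0 z * G n z + Df n 0 z * F n z := by
  rw [Cf, Df, F_eq_zpow_mul hz, G_eq_zpow_mul hz,
    show 2 * (n : ℤ) - 1 = 1 + ((n : ℤ) - 1) + ((n : ℤ) - 1) by ring,
    zpow_add₀ hz, zpow_add₀ hz, zpow_one]
  ring

theorem partial_fraction_lower_one (m : ℕ) {z : ℂ} (hz : z ≠ 0) :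
    2 * (((m + 1 : ℕ) : ℂ) + 1) * z ^ (2 * ((m + 1 : ℕ) : ℤ) - 1) * P m (J z) =
      Cf (m + 1) 1 z * G (m + 1) z + Df (m + 1) 1 z * F (m + 1) z := by
  have hJ : 2 * z * J z = z ^ 2 + 1 := by
    rw [J]
    field_simp
  have hP' := sq_sub_one_mul_P'_succ m (J z)
  simp only [Cf, Df, F_eq_zpow_mul hz, G_eq_zpow_mul hz]
  rw [show 2 * ((m + 1 : ℕ) : ℤ) - 1 = 1 + (m : ℤ) + (m : ℤ) by push_cast; ring,
    show ((m + 1 : ℕ) : ℤ) - 2 = (m : ℤ) + (-1) by push_cast; ring,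
    show ((m + 1 : ℕ) : ℤ) - 1 = (m : ℤ) by push_cast; ring,
    zpow_add₀ hz, zpow_add₀ hz, zpow_add₀ hz, zpow_one, zpow_neg_one, zpow_natCast]
  push_cast
  field_simp
  linear_combination 2 * ((m : ℂ) + 2) * (4 * z ^ 2 * hP' +
    (2 * ((m : ℂ) + 1) * z * P (m + 1) (J z) - (z ^ 2 + 1 + 2 * z * J z) * P' (m + 1) (J z)) * hJ)

theorem Cf_mul_add_Df_mul_add_two (n k : ℕ) (z a b : ℂ) :
    Cf n (k + 2) z * a + Df n (k + 2) z * b =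
      ((2 * ((n : ℂ) - (k + 1)) + 1) * J z * (Cf n (k + 1) z * a + Df n (k + 1) z * b) -
        ((n : ℂ) - (k + 1) + 1) * (Cf n k z * a + Df n k z * b)) / ((n : ℂ) - (k + 1)) := by
  simp only [Cf, Df]
  ring

theorem partial_fraction_lower_general (n : ℕ) (k : ℕ) (hk : k ≤ n) (z : ℂ) (hz : z ≠ 0) :
    2 * ((n : ℂ) + 1) * z ^ (2 * (n : ℤ) - 1) * P (n - k) (J z) =
      Cf n k z * G n z + Df n k z * F n z := by
  induction k using Nat.twoStepInduction with
  | zero => exact partial_fraction_lower_zero n hz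
  | one =>
    obtain ⟨m, rfl⟩ := Nat.exists_eq_add_of_le' hk
    exact partial_fraction_lower_one m hz
  | more k ih ih_succ =>
    obtain ⟨m, rfl⟩ := Nat.exists_eq_add_of_le hk
    rw [Cf_mul_add_Df_mul_add_two, ← ih (by omega), ← ih_succ (by omega),
      show k + 2 + m - k = m + 2 by omega, show k + 2 + m - (k + 1) = m + 1 by omega,
      show k + 2 + m - (k + 2) = m by omega]
    have hc : ((k + 2 + m : ℕ) : ℂ) - (k + 1) = m + 1 := by push_cast; ring
    rw [hc, eq_div_iff (Nat.cast_add_one_ne_zero m)]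
    linear_combination
      2 * (((k + 2 + m : ℕ) : ℂ) + 1) * z ^ (2 * ((k + 2 + m : ℕ) : ℤ) - 1) *
        add_two_mul_P_add_two m (J z)

/-- `2(n+1) z^{2n−1} P_{n−k}(J(z)) = C_k^{(n)}(z) G_n(z) + D_k^{(n)}(z) F_n(z)` for
`n ≥ 1`, `0 ≤ k ≤ n` and `z ≠ 0`. -/
theorem partial_fraction_lower (n : ℕ) (hn : 1 ≤ n) (k : ℕ) (hk : k ≤ n) (z : ℂ) (hz : z ≠ 0) :
    2 * ((n : ℂ) + 1) * z ^ (2 * (n : ℤ) - 1) * P (n - k) (J z) =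
      Cf n k z * G n z + Df n k z * F n z :=
  partial_fraction_lower_general n k hk z hz
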